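/- For all p, q ∈ ℝⁿ and ω ∈ S^{n−1}, the Glassey–Strauss post-collisional momenta satisfy p′⁰ = p⁰ + N⁰ and q′⁰ = q⁰ − N⁰, i.e. √(c² + |p + aω|²) = p⁰ + N⁰ and √(c² + |q − aω|²) = q⁰ − N⁰. In particular the collisional conservation laws hold: p′ + q′ = p + q and p′⁰ + q′⁰ = p⁰ + q⁰. -/

import Mathlib

noncomputable section

open MeasureTheory Metric Matrix

namespace RelBoltz

/-- The energy `p⁰ = √(c² + |p|²)` of a relativistic particle with momentum `p ∈ ℝⁿ`. -/
def energy (n : ℕ) (c : ℝ) (p : EuclideanSpace ℝ (Fin n)) : ℝ :=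
  Real.sqrt (c ^ 2 + ‖p‖ ^ 2)

/-- The Euclidean dot product on `ℝⁿ`. -/
def dot (n : ℕ) (p q : EuclideanSpace ℝ (Fin n)) : ℝ := ∑ i, p i * q i

/-- The relative momentum `ϱ(p,q) = √(2(p⁰q⁰ − p·q − c²))`. -/
def relMom (n : ℕ) (c : ℝ) (p q : EuclideanSpace ℝ (Fin n)) : ℝ :=
  Real.sqrt (2 * (energy n c p * energy n c q - dot n p q - c ^ 2))

/-- The quantity `s(p,q) = 2(p⁰q⁰ − p·q + c²)`. -/
def sQ (n : ℕ) (c : ℝ) (p q : EuclideanSpace ℝ (Fin n)) : ℝ :=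
  2 * (energy n c p * energy n c q - dot n p q + c ^ 2)

/-- The Minkowski metric `g = diag(−1, 1, …, 1)` as a `(1+n)×(1+n)` matrix. -/
def eta (n : ℕ) : Matrix (Fin (n + 1)) (Fin (n + 1)) ℝ :=
  Matrix.diagonal fun μ => if μ = 0 then -1 else 1

/-- A proper Lorentz transformation: `det Λ = 1` and `Λᵀ g Λ = g`. -/
def IsLorentz (n : ℕ) (Λ : Matrix (Fin (n + 1)) (Fin (n + 1)) ℝ) : Prop :=
  Λ.det = 1 ∧ Λᵀ * eta n * Λ = eta n

/-- The four-vector `p^μ = (p⁰, p) ∈ ℝ^{1+n}`. -/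
def fourVec (n : ℕ) (c : ℝ) (p : EuclideanSpace ℝ (Fin n)) : Fin (n + 1) → ℝ :=
  Fin.cons (energy n c p) fun i => p i

/-- Condition (CM): `Λ^μ_ν (p^ν + q^ν) = (√s, 0, …, 0)`. -/
def CM (n : ℕ) (c : ℝ) (Λ : Matrix (Fin (n + 1)) (Fin (n + 1)) ℝ)
    (p q : EuclideanSpace ℝ (Fin n)) : Prop :=
  Λ.mulVec (fourVec n c p + fourVec n c q) = Fin.cons (Real.sqrt (sQ n c p q)) (fun _ => (0 : ℝ))

/-- The candidate inverse `g Λᵀ g` of a Lorentz transformation. -/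
def Linv (n : ℕ) (Λ : Matrix (Fin (n + 1)) (Fin (n + 1)) ℝ) :
    Matrix (Fin (n + 1)) (Fin (n + 1)) ℝ :=
  eta n * Λᵀ * eta n

/-- The quantity `ρ = (p⁰+q⁰)/√s` appearing in the boost matrix. -/
def rhoB (n : ℕ) (c : ℝ) (p q : EuclideanSpace ℝ (Fin n)) : ℝ :=
  (energy n c p + energy n c q) / Real.sqrt (sQ n c p q)

/-- The boost matrix `Λ_b = [[ρ, −ρ vᵀ], [−ρ v, Iₙ + (ρ−1) v vᵀ/|v|²]]`
with `v = (p+q)/(p⁰+q⁰)`. -/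
def boost (n : ℕ) (c : ℝ) (p q : EuclideanSpace ℝ (Fin n)) :
    Matrix (Fin (n + 1)) (Fin (n + 1)) ℝ :=
  Matrix.of fun μ ν =>
    Fin.cases
      (Fin.cases (rhoB n c p q)
        (fun j => -rhoB n c p q * ((p j + q j) / (energy n c p + energy n c q))) ν)
      (fun i =>
        Fin.cases (-rhoB n c p q * ((p i + q i) / (energy n c p + energy n c q)))
          (fun j =>
            (if i = j then (1 : ℝ) else 0) +
              (rhoB n c p q - 1) *
                ((p i + q i) / (energy n c p + energy n c q)) *
                ((p j + q j) / (energy n c p + energy n c q)) /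
                (∑ k, ((p k + q k) / (energy n c p + energy n c q)) ^ 2)) ν) μ

/-- The vector `k ∈ ℝⁿ`, `k^i = Λ^i_μ (p^μ − q^μ)` (spatial rows of `Λ` applied
to `p^μ − q^μ`). -/
def kvec (n : ℕ) (c : ℝ) (Λ : Matrix (Fin (n + 1)) (Fin (n + 1)) ℝ)
    (p q : EuclideanSpace ℝ (Fin n)) : EuclideanSpace ℝ (Fin n) :=
  WithLp.toLp 2 fun (i : Fin n) => Λ.mulVec (fourVec n c p - fourVec n c q) i.succ

/-- `ω̄^μ = (√s/2, (ϱ/2)ω)`. -/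
def wbar (n : ℕ) (c : ℝ) (p q ω : EuclideanSpace ℝ (Fin n)) : Fin (n + 1) → ℝ :=
  Fin.cons (Real.sqrt (sQ n c p q) / 2) fun i => (relMom n c p q / 2) * ω i

/-- `ω̃^μ = (√s/2, −(ϱ/2)ω)`. -/
def wtil (n : ℕ) (c : ℝ) (p q ω : EuclideanSpace ℝ (Fin n)) : Fin (n + 1) → ℝ :=
  Fin.cons (Real.sqrt (sQ n c p q) / 2) fun i => -(relMom n c p q / 2) * ω i

/-- The center-of-momentum post-collisional four-vector `p′^μ = (Λ⁻¹)^μ_ν ω̄^ν`. -/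
def postP (n : ℕ) (c : ℝ) (Λ : Matrix (Fin (n + 1)) (Fin (n + 1)) ℝ)
    (p q ω : EuclideanSpace ℝ (Fin n)) : Fin (n + 1) → ℝ :=
  (Linv n Λ).mulVec (wbar n c p q ω)

/-- The center-of-momentum post-collisional four-vector `q′^μ = (Λ⁻¹)^μ_ν ω̃^ν`. -/
def postQ (n : ℕ) (c : ℝ) (Λ : Matrix (Fin (n + 1)) (Fin (n + 1)) ℝ)
    (p q ω : EuclideanSpace ℝ (Fin n)) : Fin (n + 1) → ℝ :=
  (Linv n Λ).mulVec (wtil n c p q ω)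

/-- The spatial part of a vector in `ℝ^{1+n}`. -/
def spat (n : ℕ) (u : Fin (n + 1) → ℝ) : EuclideanSpace ℝ (Fin n) :=
  WithLp.toLp 2 fun (i : Fin n) => u i.succ

/-- `D₁ = (p⁰+q⁰)² − (ω·(p+q))²`. -/
def D1 (n : ℕ) (c : ℝ) (p q ω : EuclideanSpace ℝ (Fin n)) : ℝ :=
  (energy n c p + energy n c q) ^ 2 - dot n ω (p + q) ^ 2

/-- `D₂ = (p⁰+q⁰){ω·(p⁰q − q⁰p)}`. -/
def D2 (n : ℕ) (c : ℝ) (p q ω : EuclideanSpace ℝ (Fin n)) : ℝ :=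
  (energy n c p + energy n c q) * dot n ω (energy n c p • q - energy n c q • p)

/-- `a(p,q,ω) = 2(p⁰+q⁰){ω·(p⁰q − q⁰p)}/D₁`. -/
def aGS (n : ℕ) (c : ℝ) (p q ω : EuclideanSpace ℝ (Fin n)) : ℝ :=
  2 * (energy n c p + energy n c q) * dot n ω (energy n c p • q - energy n c q • p) /
    D1 n c p q ω

/-- `N⁰(p,q,ω) = 2{ω·(p+q)}{ω·(p⁰q − q⁰p)}/D₁`. -/
def N0 (n : ℕ) (c : ℝ) (p q ω : EuclideanSpace ℝ (Fin n)) : ℝ :=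
  2 * dot n ω (p + q) * dot n ω (energy n c p • q - energy n c q • p) / D1 n c p q ω

/-- The Glassey–Strauss post-collisional momentum `p′ = p + a(p,q,ω)ω`. -/
def gsP (n : ℕ) (c : ℝ) (p q ω : EuclideanSpace ℝ (Fin n)) : EuclideanSpace ℝ (Fin n) :=
  p + aGS n c p q ω • ω

/-- The Glassey–Strauss post-collisional momentum `q′ = q − a(p,q,ω)ω`. -/
def gsQ (n : ℕ) (c : ℝ) (p q ω : EuclideanSpace ℝ (Fin n)) : EuclideanSpace ℝ (Fin n) :=
  q - aGS n c p q ω • ω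

/-- The Glassey–Strauss kernel `B(p,q,ω)`. -/
def BGS (n : ℕ) (c : ℝ) (p q ω : EuclideanSpace ℝ (Fin n)) : ℝ :=
  c * (energy n c p + energy n c q) ^ 2 * energy n c p * energy n c q *
    |dot n ω ((energy n c p)⁻¹ • p - (energy n c q)⁻¹ • q)| / D1 n c p q ω ^ 2

/-- The dimensional factor `A(p,q,ω)`. -/
def AGS (n : ℕ) (c : ℝ) (p q ω : EuclideanSpace ℝ (Fin n)) : ℝ :=
  (4 / relMom n c p q) * (energy n c p + energy n c q) * energy n c p * energy n c q *
    |dot n ω ((energy n c p)⁻¹ • p - (energy n c q)⁻¹ • q)| / D1 n c p q ω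

/-- The dimensional Glassey–Strauss kernel `B_n(p,q,ω) = B(p,q,ω)·(A(p,q,ω))^{n−3}`. -/
def Bn (n : ℕ) (c : ℝ) (p q ω : EuclideanSpace ℝ (Fin n)) : ℝ :=
  BGS n c p q ω * AGS n c p q ω ^ ((n : ℤ) - 3)

/-- The Møller velocity `v_ø(p,q) = (c/4) ϱ √s / (p⁰q⁰)`. -/
def moller (n : ℕ) (c : ℝ) (p q : EuclideanSpace ℝ (Fin n)) : ℝ :=
  (c / 4) * relMom n c p q * Real.sqrt (sQ n c p q) / (energy n c p * energy n c q)

/-- The explicit boost form of the combination appearing in the center-of-momentum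
post-collisional momenta. -/
def cmDir (n : ℕ) (c : ℝ) (p q ω : EuclideanSpace ℝ (Fin n)) : EuclideanSpace ℝ (Fin n) :=
  ω + ((rhoB n c p q - 1) * dot n (p + q) ω / ‖p + q‖ ^ 2) • (p + q)

/-- The explicit boost form of the center-of-momentum post-collisional momentum `p′`. -/
def cmP (n : ℕ) (c : ℝ) (p q ω : EuclideanSpace ℝ (Fin n)) : EuclideanSpace ℝ (Fin n) :=
  (1 / 2 : ℝ) • (p + q) + (relMom n c p q / 2) • cmDir n c p q ω

/-- The explicit boost form of the center-of-momentum post-collisional momentum `q′`. -/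
def cmQ (n : ℕ) (c : ℝ) (p q ω : EuclideanSpace ℝ (Fin n)) : EuclideanSpace ℝ (Fin n) :=
  (1 / 2 : ℝ) • (p + q) - (relMom n c p q / 2) • cmDir n c p q ω

/-- The explicit boost form of the vector `k`. -/
def kB (n : ℕ) (c : ℝ) (p q : EuclideanSpace ℝ (Fin n)) : EuclideanSpace ℝ (Fin n) :=
  (-(energy n c p - energy n c q) / Real.sqrt (sQ n c p q)) • (p + q) + (p - q) +
    ((rhoB n c p q - 1) * dot n (p + q) (p - q) / ‖p + q‖ ^ 2) • (p + q)

/-- The center-of-momentum scattering angle `cos θ_cm = (k/|k|)·ω`. -/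
def cosCM (n : ℕ) (c : ℝ) (p q ω : EuclideanSpace ℝ (Fin n)) : ℝ :=
  dot n (kB n c p q) ω / ‖kB n c p q‖

/-- The Glassey–Strauss scattering angle
`cos θ_gs = 1 − 8{ω·(p⁰q − q⁰p)}²/(D₁ϱ²)`. -/
def cosGS (n : ℕ) (c : ℝ) (p q ω : EuclideanSpace ℝ (Fin n)) : ℝ :=
  1 - 8 * dot n ω (energy n c p • q - energy n c q • p) ^ 2 /
    (D1 n c p q ω * relMom n c p q ^ 2)

/-- The surface measure on the unit sphere `S^{n−1} ⊂ ℝⁿ`. -/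
def sphMeasure (n : ℕ) : Measure (sphere (0 : EuclideanSpace ℝ (Fin n)) 1) :=
  (volume : Measure (EuclideanSpace ℝ (Fin n))).toSphere

/-!
Writing `P = p⁰`, `Q = q⁰`, `M = ω·(p⁰q − q⁰p)`, one checks by pure algebra that
`(p⁰ + N⁰)² = c² + |p + aω|²` and `(q⁰ − N⁰)² = c² + |q − aω|²`: in both cases the difference of
the two sides reduces to `a² − N⁰² = 4M²/D₁`. So `p⁰ + N⁰` and `q⁰ − N⁰` are `±` the energies of
`p′` and `q′`, and it remains to fix the signs. The four-momenta `(p⁰ + N⁰, p′)` and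
`(q⁰ − N⁰, q′)` lie on the mass shell and add up to `(p⁰ + q⁰, p + q)`, which is future timelike;
a past-pointing and a future-pointing vector on the mass shell never add up to a future timelike
one, so both are future-pointing.
-/

open scoped RealInnerProductSpace

lemma dot_eq_inner (n : ℕ) (p q : EuclideanSpace ℝ (Fin n)) : dot n p q = ⟪p, q⟫ := by
  simp [dot, PiLp.inner_apply, RCLike.inner_apply, mul_comm]

lemma norm_lt_energy (n : ℕ) {c : ℝ} (hc : 0 < c) (p : EuclideanSpace ℝ (Fin n)) :
    ‖p‖ < energy n c p :=
  (Real.lt_sqrt (norm_nonneg p)).2 (by linarith [pow_pos hc 2])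

lemma energy_eq_of_sq_eq (n : ℕ) {c E : ℝ} {p : EuclideanSpace ℝ (Fin n)} (hE : 0 ≤ E)
    (h : E ^ 2 = c ^ 2 + ‖p‖ ^ 2) : energy n c p = E := by
  rw [energy, ← h, Real.sqrt_sq hE]

lemma norm_add_smul_sq_of_norm_eq_one {V : Type*} [NormedAddCommGroup V] [InnerProductSpace ℝ V]
    (a : ℝ) (p ω : V) (hω : ‖ω‖ = 1) :
    ‖p + a • ω‖ ^ 2 = ‖p‖ ^ 2 + 2 * a * ⟪ω, p⟫ + a ^ 2 := by
  rw [norm_add_sq_real, real_inner_smul_right, real_inner_comm, norm_smul, hω,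
    Real.norm_eq_abs, mul_one, sq_abs]
  ring

lemma nonneg_of_sq_eq_of_norm_add_lt {V : Type*} [SeminormedAddCommGroup V] {c E F : ℝ}
    {u v : V} (hE : E ^ 2 = c ^ 2 + ‖u‖ ^ 2) (hF : F ^ 2 = c ^ 2 + ‖v‖ ^ 2)
    (h : ‖u + v‖ < E + F) : 0 ≤ E := by
  by_contra! hneg
  have hv : ‖v‖ ≤ ‖u + v‖ + ‖u‖ := by
    simpa only [add_comm v u] using norm_le_add_norm_add v u
  have hFpos : 0 < F := by linarith [norm_nonneg (u + v)]
  have hu : ‖u‖ ≤ -E := by nlinarith [norm_nonneg u, sq_nonneg c]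
  have hvF : ‖v‖ ≤ F := by nlinarith [norm_nonneg v, sq_nonneg c]
  have key : (E + F) * (F - E) ≤ ‖u + v‖ * (F - E) :=
    calc (E + F) * (F - E) = (‖v‖ - ‖u‖) * (‖v‖ + ‖u‖) := by linear_combination hF - hE
      _ ≤ ‖u + v‖ * (‖v‖ + ‖u‖) := by gcongr; linarith
      _ ≤ ‖u + v‖ * (F - E) := by gcongr; linarith [norm_nonneg (u + v)]
  nlinarith

variable (n : ℕ) (c : ℝ) (p q ω : EuclideanSpace ℝ (Fin n))

lemma gsP_add_gsQ : gsP n c p q ω + gsQ n c p q ω = p + q := by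
  rw [gsP, gsQ]
  abel

lemma energy_add_N0_sq (hω : ‖ω‖ = 1) :
    (energy n c p + N0 n c p q ω) ^ 2 = c ^ 2 + ‖gsP n c p q ω‖ ^ 2 := by
  have hp : c ^ 2 + ‖p‖ ^ 2 = energy n c p ^ 2 := (Real.sq_sqrt (by positivity)).symm
  rw [gsP, norm_add_smul_sq_of_norm_eq_one _ _ _ hω, ← add_assoc, ← add_assoc, hp, aGS, N0, D1]
  simp only [dot_eq_inner, inner_add_right, inner_sub_right, real_inner_smul_right]
  rcases eq_or_ne ((energy n c p + energy n c q) ^ 2 - (⟪ω, p⟫ + ⟪ω, q⟫) ^ 2) 0 with hD | hD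
  · simp [hD]
  · field_simp
    ring

lemma energy_sub_N0_sq (hω : ‖ω‖ = 1) :
    (energy n c q - N0 n c p q ω) ^ 2 = c ^ 2 + ‖gsQ n c p q ω‖ ^ 2 := by
  have hq : c ^ 2 + ‖q‖ ^ 2 = energy n c q ^ 2 := (Real.sq_sqrt (by positivity)).symm
  rw [gsQ, sub_eq_add_neg q, ← neg_smul, norm_add_smul_sq_of_norm_eq_one _ _ _ hω, ← add_assoc,
    ← add_assoc, hq, aGS, N0, D1]
  simp only [dot_eq_inner, inner_add_right, inner_sub_right, real_inner_smul_right]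
  rcases eq_or_ne ((energy n c p + energy n c q) ^ 2 - (⟪ω, p⟫ + ⟪ω, q⟫) ^ 2) 0 with hD | hD
  · simp [hD]
  · field_simp
    ring

theorem statement12_general (n : ℕ) (c : ℝ) (hc : 0 < c)
    (p q : EuclideanSpace ℝ (Fin n)) (ω : EuclideanSpace ℝ (Fin n)) (hω : ‖ω‖ = 1) :
    energy n c (gsP n c p q ω) = energy n c p + N0 n c p q ω ∧
    energy n c (gsQ n c p q ω) = energy n c q - N0 n c p q ω ∧
    gsP n c p q ω + gsQ n c p q ω = p + q ∧
    energy n c (gsP n c p q ω) + energy n c (gsQ n c p q ω) =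
      energy n c p + energy n c q := by
  have hP := energy_add_N0_sq n c p q ω hω
  have hQ := energy_sub_N0_sq n c p q ω hω
  have hsum := gsP_add_gsQ n c p q ω
  have htimelike : ‖gsP n c p q ω + gsQ n c p q ω‖ <
      (energy n c p + N0 n c p q ω) + (energy n c q - N0 n c p q ω) := by
    rw [hsum, add_add_sub_cancel]
    exact (norm_add_le p q).trans_lt (add_lt_add (norm_lt_energy n hc p) (norm_lt_energy n hc q))
  have eP := energy_eq_of_sq_eq n (nonneg_of_sq_eq_of_norm_add_lt hP hQ htimelike) hP
  have eQ := energy_eq_of_sq_eq n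
    (nonneg_of_sq_eq_of_norm_add_lt hQ hP (by rwa [add_comm, add_comm (energy n c q - _)])) hQ
  exact ⟨eP, eQ, hsum, by rw [eP, eQ]; ring⟩

/-- the Glassey–Strauss post-collisional momenta satisfy
`p′⁰ = p⁰ + N⁰` and `q′⁰ = q⁰ − N⁰`, and the collisional conservation laws hold. -/
theorem statement12 (n : ℕ) (hn : 2 ≤ n) (c : ℝ) (hc : 0 < c)
    (p q : EuclideanSpace ℝ (Fin n)) (ω : EuclideanSpace ℝ (Fin n)) (hω : ‖ω‖ = 1) :
    energy n c (gsP n c p q ω) = energy n c p + N0 n c p q ω ∧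
    energy n c (gsQ n c p q ω) = energy n c q - N0 n c p q ω ∧
    gsP n c p q ω + gsQ n c p q ω = p + q ∧
    energy n c (gsP n c p q ω) + energy n c (gsQ n c p q ω) =
      energy n c p + energy n c q :=
  statement12_general n c hc p q ω hω

end RelBoltz
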